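/- arXiv:1805.06999 — 5 statements merged into one kernel-verified Lean document; each statement's English description precedes it below -/
import Mathlib

section
/- Every nondegenerate Hermitian form on a finite-dimensional vector space over the finite field F_{q^2} (with involution x ↦ x^q) admits an orthonormal basis. -/
/-!
Over `F = 𝔽_{q²}` the map `x ↦ x ^ q` is additive, so the form is sesquilinear. A nondegenerate
Hermitian form has an anisotropic vector `v`, since otherwise the trace `x ↦ x + x ^ q` would vanish
identically. As `h v v` lies in the fixed field `𝔽_q` and the norm `c ↦ c ^ (q + 1)` maps `Fˣ` onto
`𝔽_qˣ`, rescaling `v` gives `h e e = 1`. The kernel of `h · e` is a complement of `F e` on which the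
form stays nondegenerate, and induction on the dimension produces an orthonormal family of
`finrank F V` vectors, hence an orthonormal basis.
-/

namespace FiniteField

variable {F : Type*} [Field F] [Fintype F] {q : ℕ}

theorem two_le_of_card_eq_sq (hq : Fintype.card F = q ^ 2) : 2 ≤ q := by
  have h := Fintype.one_lt_card (α := F)
  rw [hq] at h
  by_contra! hlt
  interval_cases q <;> omega

theorem add_pow_of_card_eq_sq (hq : Fintype.card F = q ^ 2) (x y : F) :
    (x + y) ^ q = x ^ q + y ^ q := by
  obtain ⟨p, _⟩ := CharP.exists F
  obtain ⟨f, hp, hf⟩ := FiniteField.card F p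
  have : Fact p.Prime := ⟨hp⟩
  obtain ⟨s, -, rfl⟩ := (Nat.dvd_prime_pow hp).mp (hf ▸ hq ▸ dvd_pow_self q two_ne_zero)
  exact add_pow_char_pow x y p s

theorem card_units_of_card_eq_sq (hq : Fintype.card F = q ^ 2) :
    Nat.card Fˣ = (q - 1) * (q + 1) := by
  have := two_le_of_card_eq_sq hq
  rw [Nat.card_units, Nat.card_eq_fintype_card, hq]
  zify [(by omega : 1 ≤ q), Nat.one_le_pow 2 q (by omega)]
  ring

theorem card_ker_powMonoidHom_of_card_eq_sq (hq : Fintype.card F = q ^ 2) :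
    Nat.card (powMonoidHom (q - 1) : Fˣ →* Fˣ).ker = q - 1 := by
  rw [IsCyclic.card_powMonoidHom_ker, card_units_of_card_eq_sq hq, Nat.gcd_mul_right_left]

theorem exists_pow_ne_self_of_card_eq_sq (hq : Fintype.card F = q ^ 2) : ∃ c : F, c ^ q ≠ c := by
  have hq2 := two_le_of_card_eq_sq hq
  have hlt : Nat.card (powMonoidHom (q - 1) : Fˣ →* Fˣ).ker < Nat.card Fˣ := by
    rw [card_ker_powMonoidHom_of_card_eq_sq hq, card_units_of_card_eq_sq hq]
    exact lt_mul_of_one_lt_right (by omega) (by omega)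
  obtain ⟨c, hc⟩ : ∃ c : Fˣ, c ^ (q - 1) ≠ 1 := by
    by_contra! hall
    exact hlt.ne (Subgroup.card_eq_iff_eq_top _ |>.mpr (eq_top_iff.mpr fun c _ => hall c))
  refine ⟨c, fun hcq => hc (Units.ext ?_)⟩
  rw [Units.val_pow_eq_pow_val, Units.val_one, ← mul_left_inj' c.ne_zero, ← pow_succ,
    Nat.sub_add_cancel (by omega), hcq, one_mul]

/-- In the cyclic group `Fˣ` of order `(q - 1) (q + 1)`, the `(q + 1)`-th powers and the kernel of
`x ↦ x ^ (q - 1)` both have `q - 1` elements, so they coincide. -/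
theorem exists_mul_pow_eq_of_pow_eq_self (hq : Fintype.card F = q ^ 2) {a : F} (ha : a ≠ 0)
    (haq : a ^ q = a) : ∃ c : F, c * c ^ q = a := by
  have hq2 := two_le_of_card_eq_sq hq
  have hle : (powMonoidHom (q + 1) : Fˣ →* Fˣ).range ≤ (powMonoidHom (q - 1)).ker := by
    rintro _ ⟨c, rfl⟩
    rw [MonoidHom.mem_ker, powMonoidHom_apply, powMonoidHom_apply, ← pow_mul, mul_comm,
      ← card_units_of_card_eq_sq hq, pow_card_eq_one']
  have hcard : Nat.card (powMonoidHom (q - 1) : Fˣ →* Fˣ).ker ≤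
      Nat.card (powMonoidHom (q + 1) : Fˣ →* Fˣ).range := by
    rw [card_ker_powMonoidHom_of_card_eq_sq hq, IsCyclic.card_powMonoidHom_range,
      card_units_of_card_eq_sq hq, Nat.gcd_mul_left_left, Nat.mul_div_cancel _ (by omega)]
  have hmem : Units.mk0 a ha ∈ (powMonoidHom (q - 1) : Fˣ →* Fˣ).ker := by
    rw [MonoidHom.mem_ker, powMonoidHom_apply, Units.ext_iff, Units.val_pow_eq_pow_val,
      Units.val_mk0, Units.val_one, ← mul_left_inj' ha, ← pow_succ,
      Nat.sub_add_cancel (by omega), haq, one_mul]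
  obtain ⟨c, hc⟩ := (Subgroup.eq_of_le_of_card_ge hle hcard).symm ▸ hmem
  refine ⟨c, ?_⟩
  simpa [← pow_succ'] using congrArg Units.val hc

end FiniteField

theorem orthonormal_cons {F V : Type*} [Field F] {h : V → V → F} {n : ℕ} {e : V} {b : Fin n → V}
    (hee : h e e = 1) (heb : ∀ i, h e (b i) = 0) (hbe : ∀ i, h (b i) e = 0)
    (hb : ∀ i j, h (b i) (b j) = if i = j then 1 else 0) :
    ∀ i j, h ((Fin.cons e b : Fin (n + 1) → V) i) ((Fin.cons e b : Fin (n + 1) → V) j) =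
      if i = j then 1 else 0 := by
  intro i j
  cases i using Fin.cases <;> cases j using Fin.cases <;>
    simp [hee, heb, hbe, hb, Fin.succ_ne_zero, (Fin.succ_ne_zero _).symm]

structure IsHermitianForm {F V : Type*} [Field F] [AddCommGroup V] [Module F V] (q : ℕ)
    (h : V → V → F) : Prop where
  add_left : ∀ u v w, h (u + v) w = h u w + h v w
  smul_left : ∀ (c : F) (v w : V), h (c • v) w = c * h v w
  apply_comm : ∀ v w, h v w = h w v ^ q

namespace IsHermitianForm

open Module LinearMap

variable {F V : Type*} [Field F] [AddCommGroup V] [Module F V] {q : ℕ} {h : V → V → F}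

theorem add_right [Fintype F] (hq : Fintype.card F = q ^ 2) (hh : IsHermitianForm q h)
    (u v w : V) : h u (v + w) = h u v + h u w := by
  rw [hh.apply_comm, hh.add_left, FiniteField.add_pow_of_card_eq_sq hq, ← hh.apply_comm,
    ← hh.apply_comm]

theorem smul_right (hh : IsHermitianForm q h) (c : F) (v w : V) :
    h v (c • w) = c ^ q * h v w := by
  rw [hh.apply_comm, hh.smul_left, mul_pow, ← hh.apply_comm]

theorem restrict (hh : IsHermitianForm q h) (W : Submodule F V) :
    IsHermitianForm q fun x y : W => h x y :=
  ⟨fun _ _ _ => hh.add_left _ _ _, fun _ _ _ => hh.smul_left _ _ _, fun _ _ => hh.apply_comm _ _⟩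

def linearMapLeft (hh : IsHermitianForm q h) (w : V) : V →ₗ[F] F where
  toFun := (h · w)
  map_add' := (hh.add_left · · w)
  map_smul' := (hh.smul_left · · w)

theorem linearIndependent_of_orthonormal (hh : IsHermitianForm q h) {ι : Type*} [DecidableEq ι]
    {b : ι → V} (hb : ∀ i j, h (b i) (b j) = if i = j then 1 else 0) :
    LinearIndependent F b := by
  rw [linearIndependent_iff']
  intro s g hsum i hi
  have := congrArg (hh.linearMapLeft (b i)) hsum
  rw [map_sum, map_zero] at this
  simpa [linearMapLeft, hh.smul_left, hb, hi] using this

/-- Otherwise the trace `x ↦ x + x ^ q` would vanish on `F * h v w = F` for any `h v w ≠ 0`,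
forcing `x ^ q = x` for all `x`. -/
theorem exists_apply_self_ne_zero [Fintype F] (hq : Fintype.card F = q ^ 2)
    (hh : IsHermitianForm q h) (hnd : ∀ v, (∀ w, h v w = 0) → v = 0) [Nontrivial V] :
    ∃ v, h v v ≠ 0 := by
  by_contra! hall
  obtain ⟨v, hv⟩ := exists_ne (0 : V)
  obtain ⟨w, hw⟩ : ∃ w, h v w ≠ 0 := by
    by_contra! hvw
    exact hv (hnd v hvw)
  have htrace : ∀ c : F, c * h v w + (c * h v w) ^ q = 0 := fun c => by
    have := hall (c • v + w)
    rw [hh.add_left, hh.add_right hq, hh.add_right hq, hall, hall, hh.apply_comm w,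
      hh.smul_left] at this
    linear_combination this
  obtain ⟨c, hc⟩ := FiniteField.exists_pow_ne_self_of_card_eq_sq hq
  have hw' : h v w ^ q = -h v w := by linear_combination htrace 1
  have : h v w * (c ^ q - c) = 0 := by linear_combination -(htrace c) + c ^ q * hw'
  exact hc (sub_eq_zero.mp ((mul_eq_zero.mp this).resolve_left hw))

theorem exists_apply_self_eq_one [Fintype F] (hq : Fintype.card F = q ^ 2)
    (hh : IsHermitianForm q h) (hnd : ∀ v, (∀ w, h v w = 0) → v = 0) [Nontrivial V] :
    ∃ e, h e e = 1 := by
  obtain ⟨v, hv⟩ := hh.exists_apply_self_ne_zero hq hnd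
  obtain ⟨c, hc⟩ := FiniteField.exists_mul_pow_eq_of_pow_eq_self hq (inv_ne_zero hv)
    (by rw [inv_pow, ← hh.apply_comm])
  exact ⟨c • v, by rw [hh.smul_left, hh.smul_right, ← mul_assoc, hc, inv_mul_cancel₀ hv]⟩

theorem sub_smul_mem_ker (hh : IsHermitianForm q h) {e : V} (hee : h e e = 1) (u : V) :
    u - h u e • e ∈ ker (hh.linearMapLeft e) := by
  rw [mem_ker, map_sub, map_smul]
  simp [linearMapLeft, hee]

theorem finrank_ker_add_one [FiniteDimensional F V] (hh : IsHermitianForm q h) {e : V}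
    (hee : h e e = 1) : finrank F (ker (hh.linearMapLeft e)) + 1 = finrank F V := by
  have hrange : range (hh.linearMapLeft e) = ⊤ :=
    range_eq_top.mpr fun x => ⟨x • e, by simp [linearMapLeft, hee]⟩
  rw [← finrank_range_add_finrank_ker (hh.linearMapLeft e), hrange, finrank_top,
    finrank_self, add_comm]

theorem nondegenerate_ker [Fintype F] (hq : Fintype.card F = q ^ 2) (hh : IsHermitianForm q h)
    (hnd : ∀ v, (∀ w, h v w = 0) → v = 0) {e : V} (hee : h e e = 1)
    (x : ker (hh.linearMapLeft e)) (hx : ∀ y : ker (hh.linearMapLeft e), h x y = 0) : x = 0 := by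
  refine Subtype.ext (hnd x fun u => ?_)
  have hxe : h x e = 0 := x.2
  calc h x u = h x (u - h u e • e) + h x (h u e • e) := by rw [← hh.add_right hq, sub_add_cancel]
    _ = 0 := by rw [hx ⟨_, hh.sub_smul_mem_ker hee u⟩, hh.smul_right, hxe, mul_zero, add_zero]

theorem exists_orthonormal_fin [Fintype F] (hq : Fintype.card F = q ^ 2) (n : ℕ)
    [FiniteDimensional F V] (hV : finrank F V = n) (hh : IsHermitianForm q h)
    (hnd : ∀ v, (∀ w, h v w = 0) → v = 0) :
    ∃ b : Fin n → V, ∀ i j, h (b i) (b j) = if i = j then 1 else 0 := by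
  induction n generalizing V with
  | zero => exact ⟨Fin.elim0, fun i => i.elim0⟩
  | succ n ih =>
    have : Nontrivial V := Module.nontrivial_of_finrank_pos (R := F) (by omega)
    obtain ⟨e, hee⟩ := hh.exists_apply_self_eq_one hq hnd
    obtain ⟨b, hb⟩ := ih (by have := hh.finrank_ker_add_one hee; omega) (hh.restrict _)
      (hh.nondegenerate_ker hq hnd hee)
    have hbe (i : Fin n) : h (b i) e = 0 := (b i).2
    have hq0 : q ≠ 0 := by have := FiniteField.two_le_of_card_eq_sq hq; omega
    refine ⟨Fin.cons e (Subtype.val ∘ b), orthonormal_cons hee (fun i => ?_) hbe hb⟩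
    rw [hh.apply_comm, Function.comp_apply, hbe, zero_pow hq0]

end IsHermitianForm

open Matrix

/-- Every nondegenerate Hermitian form on a finite-dimensional vector space over
`𝔽_{q²}` (with involution `x ↦ x^q`) admits an orthonormal basis. -/
theorem stmt4 (F : Type*) [Field F] [Fintype F] (q : ℕ)
    (hq : Fintype.card F = q ^ 2)
    (V : Type*) [AddCommGroup V] [Module F V] [FiniteDimensional F V]
    (n : ℕ) (hn : Module.finrank F V = n)
    (h : V → V → F)
    (hadd : ∀ u v w, h (u + v) w = h u w + h v w)
    (hsmul : ∀ (c : F) (v w : V), h (c • v) w = c * h v w)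
    (hherm : ∀ v w, h v w = (h w v) ^ q)
    (hnondeg : ∀ v, (∀ w, h v w = 0) → v = 0) :
    ∃ b : Module.Basis (Fin n) F V, ∀ i j, h (b i) (b j) = if i = j then 1 else 0 := by
  have hh : IsHermitianForm q h := ⟨hadd, hsmul, hherm⟩
  obtain ⟨b, hb⟩ := hh.exists_orthonormal_fin hq n hn hnondeg
  refine ⟨basisOfLinearIndependentOfCardEqFinrank' b (hh.linearIndependent_of_orthonormal hb)
    (by rw [Fintype.card_fin, hn]), ?_⟩
  simpa using hb
end

section
/- Let F be a finite field with q^2 elements with involution x ↦ x^q, and let V, W be finite-dimensional F-vector spaces each equipped with a nondegenerate Hermitian form. For any F-linear map T : V → W with adjoint T*, there exist orthogonal decompositions V = V₁ ⊥ V₂ and W = W₁ ⊥ W₂ such that T maps V₁ bijectively onto W₁, T(V₂) ⊆ W₂, and T*T restricted to V₂ is nilpotent. -/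
open Matrix

/-- Decomposition of a linear map between Hermitian spaces over `𝔽_{q²}` into an
invertible part and a part on which `T*T` is nilpotent. -/
theorem stmt5 (F : Type*) [Field F] [Fintype F] (q : ℕ)
    (hq : Fintype.card F = q ^ 2)
    (V W : Type*) [AddCommGroup V] [Module F V] [FiniteDimensional F V]
    [AddCommGroup W] [Module F W] [FiniteDimensional F W]
    (hV : V → V → F) (hW : W → W → F)
    (hVadd : ∀ u v w, hV (u + v) w = hV u w + hV v w)
    (hVsmul : ∀ (c : F) (v w : V), hV (c • v) w = c * hV v w)
    (hVherm : ∀ v w, hV v w = (hV w v) ^ q)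
    (hVnd : ∀ v, (∀ w, hV v w = 0) → v = 0)
    (hWadd : ∀ u v w, hW (u + v) w = hW u w + hW v w)
    (hWsmul : ∀ (c : F) (v w : W), hW (c • v) w = c * hW v w)
    (hWherm : ∀ v w, hW v w = (hW w v) ^ q)
    (hWnd : ∀ w, (∀ w', hW w w' = 0) → w = 0)
    (T : V →ₗ[F] W) (Tstar : W →ₗ[F] V)
    (hadj : ∀ v w, hW (T v) w = hV v (Tstar w)) :
    ∃ (V₁ V₂ : Submodule F V) (W₁ W₂ : Submodule F W),
      IsCompl V₁ V₂ ∧ IsCompl W₁ W₂ ∧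
      (∀ v₁ ∈ V₁, ∀ v₂ ∈ V₂, hV v₁ v₂ = 0) ∧
      (∀ w₁ ∈ W₁, ∀ w₂ ∈ W₂, hW w₁ w₂ = 0) ∧
      V₁.map T = W₁ ∧ Disjoint V₁ (LinearMap.ker T) ∧
      V₂.map T ≤ W₂ ∧
      ∃ k : ℕ, ∀ v ∈ V₂, ((Tstar ∘ₗ T) ^ k) v = 0 := by
  classical
  -- `q ≠ 0`
  have hq0 : q ≠ 0 := by
    rintro rfl
    have := Fintype.card_pos (α := F)
    rw [hq] at this
    simp at this
  -- the forms vanish when the second argument is `0`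
  have hV0 : ∀ v : V, hV v 0 = 0 := by
    intro v
    have h1 : hV (0 : V) v = 0 := by
      have := hVadd 0 0 v
      rw [add_zero] at this
      exact (left_eq_add.mp this)
    rw [hVherm, h1, zero_pow hq0]
  have hW0 : ∀ w : W, hW w 0 = 0 := by
    intro w
    have h1 : hW (0 : W) w = 0 := by
      have := hWadd 0 0 w
      rw [add_zero] at this
      exact (left_eq_add.mp this)
    rw [hWherm, h1, zero_pow hq0]
  set S : V →ₗ[F] V := Tstar ∘ₗ T with hSdef
  set S' : W →ₗ[F] W := T ∘ₗ Tstar with hS'def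
  have hps : ∀ (k : ℕ) (x : V), (S ^ (k + 1)) x = S ((S ^ k) x) := fun k x => by
    rw [pow_succ']; exact Module.End.mul_apply S (S ^ k) x
  have hps' : ∀ (k : ℕ) (x : V), (S ^ (k + 1)) x = (S ^ k) (S x) := fun k x => by
    rw [pow_succ]; exact Module.End.mul_apply (S ^ k) S x
  have hqs : ∀ (k : ℕ) (x : W), (S' ^ (k + 1)) x = S' ((S' ^ k) x) := fun k x => by
    rw [pow_succ']; exact Module.End.mul_apply S' (S' ^ k) x
  have hqs' : ∀ (k : ℕ) (x : W), (S' ^ (k + 1)) x = (S' ^ k) (S' x) := fun k x => by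
    rw [pow_succ]; exact Module.End.mul_apply (S' ^ k) S' x
  -- commutation relation
  have hcomm : ∀ (k : ℕ) (v : V), T ((S ^ k) v) = (S' ^ k) (T v) := by
    intro k
    induction k with
    | zero => intro v; simp
    | succ k ih =>
      intro v
      rw [hps, hqs, ← ih v]
      rfl
  -- `S` is self-adjoint
  have hSA : ∀ u v : V, hV (S u) v = hV u (S v) := by
    intro u v
    calc hV (S u) v = (hV v (S u)) ^ q := hVherm _ _
      _ = (hW (T v) (T u)) ^ q := by rw [hadj v (T u)]; rfl
      _ = hW (T u) (T v) := (hWherm _ _).symm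
      _ = hV u (Tstar (T v)) := hadj u (T v)
      _ = hV u (S v) := rfl
  have hSAk : ∀ (k : ℕ) (u v : V), hV ((S ^ k) u) v = hV u ((S ^ k) v) := by
    intro k
    induction k with
    | zero => intro u v; simp
    | succ k ih =>
      intro u v
      rw [hps k u, hps' k v, hSA ((S ^ k) u) v, ih u (S v)]
  -- `S'` is self-adjoint
  have hS'A : ∀ u w : W, hW (S' u) w = hW u (S' w) := by
    intro u w
    calc hW (S' u) w = hW (T (Tstar u)) w := rfl
      _ = hV (Tstar u) (Tstar w) := hadj _ _
      _ = (hV (Tstar w) (Tstar u)) ^ q := hVherm _ _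
      _ = (hW (T (Tstar w)) u) ^ q := by rw [hadj (Tstar w) u]
      _ = (hW (S' w) u) ^ q := rfl
      _ = hW u (S' w) := (hWherm _ _).symm
  have hS'Ak : ∀ (k : ℕ) (u w : W), hW ((S' ^ k) u) w = hW u ((S' ^ k) w) := by
    intro k
    induction k with
    | zero => intro u w; simp
    | succ k ih =>
      intro u w
      rw [hqs k u, hqs' k w, hS'A ((S' ^ k) u) w, ih u (S' w)]
  -- Fitting decomposition: choose a suitable exponent `N`
  obtain ⟨n, hn⟩ := Filter.eventually_atTop.mp <|
    (S.eventually_isCompl_ker_pow_range_pow.and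
      (S'.eventually_isCompl_ker_pow_range_pow.and S'.eventually_iInf_range_pow_eq))
  set N := max n 1 with hNdef
  have hNn : n ≤ N := le_max_left _ _
  have hN1 : 1 ≤ N := le_max_right _ _
  obtain ⟨hcV, hcW, hrW⟩ := hn N hNn
  obtain ⟨-, -, hrW'⟩ := hn (N + 1) (by omega)
  have hstab : LinearMap.range (S' ^ (N + 1)) = LinearMap.range (S' ^ N) := by
    rw [← hrW', hrW]
  refine ⟨LinearMap.range (S ^ N), LinearMap.ker (S ^ N),
    LinearMap.range (S' ^ N), LinearMap.ker (S' ^ N),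
    hcV.symm, hcW.symm, ?_, ?_, ?_, ?_, ?_, ⟨N, ?_⟩⟩
  · -- orthogonality in V
    rintro v₁ ⟨u, rfl⟩ v₂ hv₂
    rw [hSAk N u v₂, LinearMap.mem_ker.mp hv₂, hV0]
  · -- orthogonality in W
    rintro w₁ ⟨u, rfl⟩ w₂ hw₂
    rw [hS'Ak N u w₂, LinearMap.mem_ker.mp hw₂, hW0]
  · -- `T` maps `V₁` onto `W₁`
    apply le_antisymm
    · rintro _ ⟨v, ⟨u, rfl⟩, rfl⟩
      exact ⟨T u, (hcomm N u).symm⟩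
    · intro w hw
      rw [← hstab] at hw
      obtain ⟨u, rfl⟩ := hw
      refine ⟨(S ^ N) (Tstar u), ⟨Tstar u, rfl⟩, ?_⟩
      rw [hcomm N (Tstar u), hqs' N u]
      rfl
  · -- `T` is injective on `V₁`
    rw [Submodule.disjoint_def]
    rintro v hv hvT
    have hSv : S v = 0 := by
      simp [hSdef, LinearMap.mem_ker.mp hvT]
    have hSNv : (S ^ N) v = 0 := by
      obtain ⟨m, hm⟩ : ∃ m, N = m + 1 := ⟨N - 1, by omega⟩
      rw [hm, hps' m v, hSv, map_zero]
    exact Submodule.disjoint_def.mp hcV.disjoint v hSNv hv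
  · -- `T` maps `V₂` into `W₂`
    rintro _ ⟨v, hv, rfl⟩
    rw [LinearMap.mem_ker, ← hcomm N v, LinearMap.mem_ker.mp hv, map_zero]
  · -- nilpotency on `V₂`
    intro v hv
    exact LinearMap.mem_ker.mp hv
end

section
/- Let F = F_{q^2} with involution x ↦ x^q, and let H ∈ M_d(F) be a Hermitian matrix of rank d−1. Then there exists a column vector v ∈ F^d such that H − v·v* is invertible. -/
/-!
Since `q ^ 2` is a power of the characteristic, `x ↦ x ^ q` is a ring endomorphism `σ`, and the
hypothesis says `H` is `σ`-Hermitian. A rank `d - 1` matrix has a kernel spanned by some `w ≠ 0`,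
and Hermitian symmetry makes `σ ∘ w` a left kernel vector. For a coordinate `j` with `w j ≠ 0`,
`(H - e_j e_jᵀ) x = 0` gives `H x = x_j e_j`; pairing with `σ ∘ w` forces `x_j = 0`, so
`x ∈ ker H = span w`, and `x_j = 0` then forces `x = 0`.
-/

open Matrix Module

theorem FiniteField.exists_ringHom_coe_eq_pow_of_dvd_card {F : Type*} [Field F] [Fintype F]
    {q : ℕ} (hq : q ∣ Fintype.card F) : ∃ σ : F →+* F, ⇑σ = (· ^ q) := by
  obtain ⟨n, hp, hcard⟩ := FiniteField.card F (ringChar F)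
  obtain ⟨m, -, rfl⟩ := (Nat.dvd_prime_pow hp).mp (hcard ▸ hq)
  have : ExpChar F (ringChar F) := ExpChar.prime hp
  exact ⟨iterateFrobenius F (ringChar F) m,
    funext (iterateFrobenius_def (R := F) (p := ringChar F) m)⟩

namespace Matrix

variable {n K : Type*} [Fintype n] [Field K]

theorem finrank_ker_mulVecLin_eq_one {H : Matrix n n K} (hn : 0 < Fintype.card n)
    (hrank : H.rank = Fintype.card n - 1) : finrank K (LinearMap.ker H.mulVecLin) = 1 := by
  have := LinearMap.finrank_range_add_finrank_ker H.mulVecLin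
  rw [Module.finrank_fintype_fun_eq_card] at this
  rw [Matrix.rank] at hrank
  omega

theorem vecMul_comp_eq_zero_of_map_transpose_eq {R : Type*} [CommSemiring R] (σ : R →+* R)
    {H : Matrix n n R} (hH : (H.map σ)ᵀ = H) {w : n → R} (hw : H *ᵥ w = 0) :
    (σ ∘ w) ᵥ* H = 0 := by
  funext i
  rw [← hH, vecMul_transpose, ← RingHom.map_mulVec, hw, Pi.zero_apply, map_zero]

theorem isUnit_sub_vecMulVec_of_ker_le_span [DecidableEq n] {H : Matrix n n K} {w u a b : n → K}
    (hker : LinearMap.ker H.mulVecLin ≤ K ∙ w) (hu : u ᵥ* H = 0)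
    (hua : u ⬝ᵥ a ≠ 0) (hbw : b ⬝ᵥ w ≠ 0) : IsUnit (H - vecMulVec a b) := by
  rw [← mulVec_injective_iff_isUnit]
  refine (injective_iff_map_eq_zero (H - vecMulVec a b).mulVecLin).mpr
    fun x (hx : _ *ᵥ x = 0) => ?_
  have hHx : H *ᵥ x = (b ⬝ᵥ x) • a := by
    rw [sub_mulVec, sub_eq_zero] at hx
    rw [hx, vecMulVec_mulVec, op_smul_eq_smul]
  have hbx : b ⬝ᵥ x = 0 := by
    have : u ⬝ᵥ H *ᵥ x = 0 := by rw [dotProduct_mulVec, hu, zero_dotProduct]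
    rw [hHx, dotProduct_smul, smul_eq_mul, mul_eq_zero] at this
    exact this.resolve_right hua
  obtain ⟨c, rfl⟩ := Submodule.mem_span_singleton.mp <|
    hker (show H *ᵥ x = 0 by rw [hHx, hbx, zero_smul])
  rw [dotProduct_smul, smul_eq_mul, mul_eq_zero] at hbx
  rw [hbx.resolve_right hbw, zero_smul]

theorem exists_isUnit_sub_vecMulVec_comp [DecidableEq n] (σ : K →+* K) {H : Matrix n n K}
    (hH : (H.map σ)ᵀ = H) (hker : finrank K (LinearMap.ker H.mulVecLin) = 1) :
    ∃ v : n → K, IsUnit (H - vecMulVec v (σ ∘ v)) := by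
  obtain ⟨⟨w, hHw⟩, hw0, hspan⟩ := finrank_eq_one_iff'.mp hker
  have hker_le : LinearMap.ker H.mulVecLin ≤ K ∙ w := fun x hx => by
    obtain ⟨c, hc⟩ := hspan ⟨x, hx⟩
    exact Submodule.mem_span_singleton.mpr ⟨c, congrArg Subtype.val hc⟩
  obtain ⟨j, hj⟩ := Function.ne_iff.mp (Subtype.coe_ne_coe.mpr hw0)
  refine ⟨Pi.single j 1, isUnit_sub_vecMulVec_of_ker_le_span hker_le
    (vecMul_comp_eq_zero_of_map_transpose_eq σ hH hHw) ?_ ?_⟩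
  · rw [dotProduct_single, mul_one]
    exact (map_ne_zero σ).mpr hj
  · have hσe : σ ∘ Pi.single j 1 = Pi.single j 1 := funext fun k => by
      simpa using Pi.apply_single (fun _ => σ) (fun _ => map_zero σ) j 1 k
    rwa [hσe, single_dotProduct, one_mul]

end Matrix

/-- If `H` is a Hermitian `d × d` matrix over `𝔽_{q²}` of rank `d - 1`, then
there is a column vector `v` with `H - v·v*` invertible. -/
theorem stmt7 (F : Type*) [Field F] [Fintype F] (q d : ℕ)
    (hq : Fintype.card F = q ^ 2) (hd : 0 < d)
    (H : Matrix (Fin d) (Fin d) F) (hH : (H.map (· ^ q))ᵀ = H)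
    (hrank : H.rank = d - 1) :
    ∃ v : Fin d → F,
      IsUnit (H - Matrix.of fun i j => v i * (v j) ^ q) := by
  obtain ⟨σ, hσ⟩ :=
    FiniteField.exists_ringHom_coe_eq_pow_of_dvd_card (hq ▸ dvd_pow_self q two_ne_zero)
  have hker := finrank_ker_mulVecLin_eq_one (H := H) (by simpa using hd) (by simpa using hrank)
  obtain ⟨v, hv⟩ := exists_isUnit_sub_vecMulVec_comp σ (hσ ▸ hH) hker
  exact ⟨v, by simpa only [vecMulVec, Function.comp_apply, hσ] using hv⟩
end

section
/- Let F = F_{q^2} with involution x ↦ x^q. For every positive integer d there exists a matrix B ∈ M_{d×(d+1)}(F) such that both B·B* and B*·B are nilpotent with a single Jordan block, i.e., B·B* is nilpotent of rank d−1 with (BB*)^{d-1} ≠ 0, and B*·B is nilpotent of rank d with (B*B)^d ≠ 0. -/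
open Matrix

/-!
Let `W` be the exchange (anti-identity) matrix, `J` the nilpotent shift and `E = [0 | 1]` the
`d × (d + 1)` matrix deleting the first coordinate. Reversing coordinates turns `Fin.succ` into
`Fin.castSucc`, which gives `Eᵀ W_d E = W_{d+1} J_{d+1}` and `E W_{d+1} Eᵀ = J_d W_d`.

Over `𝔽_{q²}` with `x* = x ^ q`, the Hermitian form with Gram matrix `W` is equivalent to the
standard one: `W` is an orthogonal sum of hyperbolic planes (plus `⟨1⟩` in odd size), and a
hyperbolic plane is spanned by the isotropic vectors `(1, b)`, `(1, b')` for two distinct `b, b'`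
of norm `b ^ (q + 1) = -1`. So `P* P = W` for invertible `P`, with `P⁻¹ = W P*`, and for
`B = P_d E P_{d+1}⁻¹` both `B* B = P_{d+1} J P_{d+1}⁻¹` and `B B* = P_d J P_d⁻¹` are conjugate
to shift matrices.
-/

lemma Fin.sum_ite_val_eq {M : Type*} [AddCommMonoid M] {m : ℕ} (a : ℕ) (f : Fin m → M) :
    ∑ t : Fin m, (if (t : ℕ) = a then f t else 0) = if h : a < m then f ⟨a, h⟩ else 0 := by
  split_ifs with h
  · rw [Fintype.sum_eq_single ⟨a, h⟩ fun t ht => if_neg fun h' => ht (Fin.ext h')]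
    simp
  · exact Finset.sum_eq_zero fun t _ => if_neg (by omega)

section Exchange
variable (R : Type*) [Semiring R] (m : ℕ)

def exchangeMatrix : Matrix (Fin m) (Fin m) R :=
  of fun i j => if i.rev = j then 1 else 0

variable {R m}

lemma exchangeMatrix_mul {n : Type*} (M : Matrix (Fin m) n R) :
    exchangeMatrix R m * M = M.submatrix Fin.rev id := by
  ext i j; simp [exchangeMatrix, mul_apply]

lemma mul_exchangeMatrix {n : Type*} [Fintype n] (M : Matrix n (Fin m) R) :
    M * exchangeMatrix R m = M.submatrix id Fin.rev := by
  ext i j; simp [exchangeMatrix, mul_apply, Fin.rev_eq_iff]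

lemma exchangeMatrix_mul_self : exchangeMatrix R m * exchangeMatrix R m = 1 := by
  rw [exchangeMatrix_mul]; ext i j; simp [exchangeMatrix, one_apply]

lemma exchangeMatrix_mul_diagonal (u : Fin m → R) :
    exchangeMatrix R m * diagonal u = diagonal (fun i => u i.rev) * exchangeMatrix R m := by
  rw [exchangeMatrix_mul, mul_exchangeMatrix]; ext i j; simp [diagonal_apply, Fin.rev_eq_iff]

lemma conjTranspose_exchangeMatrix [StarRing R] : (exchangeMatrix R m)ᴴ = exchangeMatrix R m := by
  ext i j
  simp only [conjTranspose_apply, exchangeMatrix, of_apply, Fin.rev_eq_iff, eq_comm (a := j)]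
  split_ifs <;> simp

lemma diagonal_add_diagonal_mul_exchangeMatrix_mul (a b c e : Fin m → R) :
    (diagonal a + diagonal b * exchangeMatrix R m) * (diagonal c + diagonal e * exchangeMatrix R m)
      = diagonal (fun i => a i * c i + b i * e i.rev)
        + diagonal (fun i => a i * e i + b i * c i.rev) * exchangeMatrix R m := by
  have hDW : ∀ u v, diagonal u * exchangeMatrix R m * diagonal v
      = diagonal (fun i => u i * v i.rev) * exchangeMatrix R m := by
    intro u v
    rw [Matrix.mul_assoc, exchangeMatrix_mul_diagonal, ← Matrix.mul_assoc, diagonal_mul_diagonal]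
  simp only [add_mul, mul_add, ← Matrix.mul_assoc, hDW, diagonal_mul_diagonal]
  rw [Matrix.mul_assoc _ (exchangeMatrix R m), exchangeMatrix_mul_self, Matrix.mul_one,
    ← diagonal_add, ← diagonal_add, add_mul]
  abel

end Exchange

section Shift
variable (R : Type*) [Semiring R] (m : ℕ)

def shiftMatrix : Matrix (Fin m) (Fin m) R :=
  of fun i j => if (j : ℕ) = i + 1 then 1 else 0

def tailMatrix (d : ℕ) : Matrix (Fin d) (Fin (d + 1)) R :=
  of fun i j => if i.succ = j then 1 else 0

variable {R m}

lemma shiftMatrix_pow (k : ℕ) :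
    shiftMatrix R m ^ k = of fun i j : Fin m => if (j : ℕ) = i + k then 1 else 0 := by
  induction k with
  | zero => ext i j; simp [one_apply, Fin.ext_iff, eq_comm]
  | succ k ih =>
    ext i j
    rw [pow_succ, ih, mul_apply]
    simp only [shiftMatrix, of_apply, ite_mul, one_mul, zero_mul, Fin.sum_ite_val_eq]
    split_ifs <;> first | rfl | omega

lemma shiftMatrix_pow_self : shiftMatrix R m ^ m = 0 := by
  ext i j; simp [shiftMatrix_pow]; omega

lemma shiftMatrix_pow_pred_ne_zero [Nontrivial R] (hm : 0 < m) :
    shiftMatrix R m ^ (m - 1) ≠ 0 := by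
  rw [shiftMatrix_pow]
  intro h
  simpa using congrFun (congrFun h ⟨0, hm⟩) ⟨m - 1, by omega⟩

lemma shiftMatrix_mul_transpose :
    shiftMatrix R m * (shiftMatrix R m)ᵀ
      = diagonal fun i : Fin m => if (i : ℕ) < m - 1 then 1 else 0 := by
  ext i j
  rw [mul_apply]
  simp only [shiftMatrix, transpose_apply, of_apply, ite_mul, one_mul, zero_mul,
    Fin.sum_ite_val_eq, diagonal_apply, Fin.ext_iff]
  split_ifs <;> first | rfl | omega

lemma rank_shiftMatrix {K : Type*} [Field K] : (shiftMatrix K m).rank = m - 1 := by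
  classical
  have hJ : shiftMatrix K m * (shiftMatrix K m)ᵀ * shiftMatrix K m = shiftMatrix K m := by
    rw [shiftMatrix_mul_transpose]
    ext i j
    simp only [diagonal_mul, shiftMatrix, of_apply, mul_ite, mul_one, mul_zero]
    split_ifs <;> first | rfl | omega
  have hJJ : (shiftMatrix K m * (shiftMatrix K m)ᵀ).rank = m - 1 := by
    rw [shiftMatrix_mul_transpose, rank_diagonal]
    simp only [ne_eq, ite_eq_right_iff, one_ne_zero, imp_false, not_not]
    exact Fintype.card_fin_lt_of_le (Nat.sub_le m 1)
  refine le_antisymm ?_ (hJJ ▸ rank_mul_le_left _ _)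
  calc (shiftMatrix K m).rank
      = (shiftMatrix K m * (shiftMatrix K m)ᵀ * shiftMatrix K m).rank := by rw [hJ]
    _ ≤ m - 1 := hJJ ▸ rank_mul_le_left _ _

lemma tailMatrix_mul {n : Type*} {d : ℕ} (M : Matrix (Fin (d + 1)) n R) :
    tailMatrix R d * M = M.submatrix Fin.succ id := by
  ext i j; simp [tailMatrix, mul_apply]

lemma transpose_tailMatrix_mul_exchangeMatrix_mul_tailMatrix (d : ℕ) :
    (tailMatrix R d)ᵀ * exchangeMatrix R d * tailMatrix R d
      = exchangeMatrix R (d + 1) * shiftMatrix R (d + 1) := by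
  rw [Matrix.mul_assoc, exchangeMatrix_mul, exchangeMatrix_mul]
  ext i j
  refine Fin.cases ?_ (fun i => ?_) i
  · simp [tailMatrix, mul_apply, shiftMatrix]
    omega
  · simp only [mul_apply, transpose_apply, submatrix_apply, tailMatrix, of_apply, ite_mul, one_mul,
      zero_mul, Fin.succ_inj, Finset.sum_ite_eq', Finset.mem_univ, if_true]
    simp only [shiftMatrix, of_apply, Fin.ext_iff, Fin.val_succ, Fin.val_rev]
    exact if_congr (by omega) rfl rfl

lemma tailMatrix_mul_exchangeMatrix_mul_transpose (d : ℕ) :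
    tailMatrix R d * exchangeMatrix R (d + 1) * (tailMatrix R d)ᵀ
      = shiftMatrix R d * exchangeMatrix R d := by
  rw [Matrix.mul_assoc, exchangeMatrix_mul, tailMatrix_mul, mul_exchangeMatrix]
  ext i j
  simp only [tailMatrix, shiftMatrix, transpose_apply, submatrix_apply, of_apply, Fin.ext_iff,
    Fin.val_succ, Fin.val_rev, id]
  exact if_congr (by omega) rfl rfl

lemma conjTranspose_tailMatrix [StarRing R] (d : ℕ) : (tailMatrix R d)ᴴ = (tailMatrix R d)ᵀ := by
  ext i j
  simp only [tailMatrix, conjTranspose_apply, transpose_apply, of_apply]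
  split_ifs <;> simp

end Shift

lemma exists_conjTranspose_mul_self_eq_exchangeMatrix {K : Type*} [Field K] [StarRing K]
    {b b' : K} (hb : star b * b = -1) (hb' : star b' * b' = -1) (hne : b ≠ b') (m : ℕ) :
    ∃ P : Matrix (Fin m) (Fin m) K, Pᴴ * P = exchangeMatrix K m := by
  have hs : 1 + star b * b' ≠ 0 := by
    intro h
    apply hne
    linear_combination b * h - b' * hb
  set c := (1 + star b * b')⁻¹
  have hc : (1 + star b * b') * c = 1 := mul_inv_cancel₀ hs
  have hc' : star c * (1 + star b' * b) = 1 := by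
    simpa only [star_mul, star_add, star_one, star_star] using congrArg star hc
  -- For `i < i.rev`, columns `i` and `i.rev` of `P` are `(1, b)` and `c • (1, b')` in the
  -- coordinates `(i, i.rev)`; a middle coordinate `i = i.rev` gets the unit vector.
  let u : Fin m → K := fun i => if i.rev < i then c * b' else 1
  let v : Fin m → K := fun i => if i < i.rev then c else if i.rev < i then b else 0
  refine ⟨diagonal u + diagonal v * exchangeMatrix K m, ?_⟩
  rw [conjTranspose_add, conjTranspose_mul, conjTranspose_exchangeMatrix, diagonal_conjTranspose,
    diagonal_conjTranspose, exchangeMatrix_mul_diagonal,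
    diagonal_add_diagonal_mul_exchangeMatrix_mul, mul_exchangeMatrix]
  ext i j
  rcases lt_trichotomy i i.rev with h | h | h
  · have h' : ¬ i.rev < i := lt_asymm h
    have hβ : c + star b * (c * b') = 1 := by linear_combination hc
    simp [u, v, h, h', exchangeMatrix, diagonal_apply, hb, hβ, Fin.rev_eq_iff]
  · simp [u, v, h.symm, exchangeMatrix, diagonal_apply]
  · have h' : ¬ i < i.rev := lt_asymm h
    have hα : star c * star b' * (c * b') + star c * c = 0 := by
      linear_combination (star c * c) * hb'
    have hβ : star c * star b' * b + star c = 1 := by linear_combination hc'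
    simp [u, v, h, h', exchangeMatrix, diagonal_apply, hα, hβ, Fin.rev_eq_iff]

section RegularNilpotent
variable {K : Type*} [Field K] {m : ℕ}

/-- Nilpotent with a single Jordan block. -/
def IsRegularNilpotent (N : Matrix (Fin m) (Fin m) K) : Prop :=
  IsNilpotent N ∧ N.rank = m - 1 ∧ N ^ (m - 1) ≠ 0

lemma isRegularNilpotent_conj_shiftMatrix {P P' : Matrix (Fin m) (Fin m) K} (hP : P' * P = 1)
    (hm : 0 < m) : IsRegularNilpotent (P * shiftMatrix K m * P') := by
  have hP' : P * P' = 1 := mul_eq_one_comm.1 hP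
  have hpow (k : ℕ) : (P * shiftMatrix K m * P') ^ k = P * shiftMatrix K m ^ k * P' :=
    Units.conj_pow ⟨P, P', hP', hP⟩ _ k
  refine ⟨⟨m, by rw [hpow, shiftMatrix_pow_self, Matrix.mul_zero, Matrix.zero_mul]⟩, ?_, ?_⟩
  · rw [rank_mul_eq_left_of_isUnit_det _ _ (isUnit_det_of_right_inverse hP),
      rank_mul_eq_right_of_isUnit_det _ _ (isUnit_det_of_right_inverse hP'), rank_shiftMatrix]
  · intro h
    apply shiftMatrix_pow_pred_ne_zero (R := K) hm
    calc shiftMatrix K m ^ (m - 1) = P' * (P * shiftMatrix K m ^ (m - 1) * P') * P := by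
          simp only [← Matrix.mul_assoc, hP, Matrix.one_mul]
          rw [Matrix.mul_assoc, hP, Matrix.mul_one]
      _ = 0 := by rw [← hpow, h, Matrix.mul_zero, Matrix.zero_mul]

end RegularNilpotent

theorem exists_isRegularNilpotent_mul_conjTranspose {K : Type*} [Field K] [StarRing K]
    {b b' : K} (hb : star b * b = -1) (hb' : star b' * b' = -1) (hne : b ≠ b') {d : ℕ}
    (hd : 0 < d) :
    ∃ B : Matrix (Fin d) (Fin (d + 1)) K,
      IsRegularNilpotent (B * Bᴴ) ∧ IsRegularNilpotent (Bᴴ * B) := by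
  obtain ⟨P, hP⟩ := exists_conjTranspose_mul_self_eq_exchangeMatrix hb hb' hne d
  obtain ⟨Q, hQ⟩ := exists_conjTranspose_mul_self_eq_exchangeMatrix hb hb' hne (d + 1)
  have hinv {m : ℕ} {R : Matrix (Fin m) (Fin m) K} (hR : Rᴴ * R = exchangeMatrix K m) :
      exchangeMatrix K m * Rᴴ * R = 1 := by
    rw [Matrix.mul_assoc, hR, exchangeMatrix_mul_self]
  set B := P * tailMatrix K d * (exchangeMatrix K (d + 1) * Qᴴ)
  have hBH : Bᴴ = Q * exchangeMatrix K (d + 1) * (tailMatrix K d)ᵀ * Pᴴ := by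
    simp only [B, conjTranspose_mul, conjTranspose_conjTranspose, conjTranspose_exchangeMatrix,
      conjTranspose_tailMatrix, Matrix.mul_assoc]
  refine ⟨B, ?_, ?_⟩
  · convert isRegularNilpotent_conj_shiftMatrix (hinv hP) hd using 1
    calc B * Bᴴ = P * (tailMatrix K d * exchangeMatrix K (d + 1) * (Qᴴ * Q)
          * exchangeMatrix K (d + 1) * (tailMatrix K d)ᵀ) * Pᴴ := by
          rw [hBH]; simp only [B, Matrix.mul_assoc]
      _ = P * shiftMatrix K d * (exchangeMatrix K d * Pᴴ) := by
          rw [hQ, Matrix.mul_assoc (tailMatrix K d), exchangeMatrix_mul_self, Matrix.mul_one,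
            tailMatrix_mul_exchangeMatrix_mul_transpose]
          simp only [Matrix.mul_assoc]
  · convert isRegularNilpotent_conj_shiftMatrix (hinv hQ) (Nat.succ_pos d) using 1
    calc Bᴴ * B = Q * exchangeMatrix K (d + 1)
          * ((tailMatrix K d)ᵀ * (Pᴴ * P) * tailMatrix K d) * (exchangeMatrix K (d + 1) * Qᴴ) := by
          rw [hBH]; simp only [B, Matrix.mul_assoc]
      _ = Q * shiftMatrix K (d + 1) * (exchangeMatrix K (d + 1) * Qᴴ) := by
          rw [hP, transpose_tailMatrix_mul_exchangeMatrix_mul_tailMatrix]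
          simp only [Matrix.mul_assoc]
          rw [← Matrix.mul_assoc (exchangeMatrix K (d + 1)), exchangeMatrix_mul_self,
            Matrix.one_mul]

namespace FiniteField

variable {F : Type*} [Field F] [Fintype F] {q : ℕ}

theorem exists_ringHom_eq_pow_of_card_eq_sq (hq : Fintype.card F = q ^ 2) :
    ∃ φ : F →+* F, ∀ x, φ x = x ^ q := by
  obtain ⟨p, hchar, n, hp, hcard⟩ := FiniteField.card' F
  have := Fact.mk hp
  obtain ⟨a, -, rfl⟩ := (Nat.dvd_prime_pow hp).1 (hcard ▸ hq ▸ Dvd.intro_left _ (sq q).symm)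
  exact ⟨iterateFrobenius F p a, iterateFrobenius_def p a⟩

theorem exists_ne_pow_succ_eq_neg_one_of_card_eq_sq (hq : Fintype.card F = q ^ 2)
    (hneg : (-1 : F) ^ q = -1) : ∃ b b' : F, b ≠ b' ∧ b ^ (q + 1) = -1 ∧ b' ^ (q + 1) = -1 := by
  have hq0 : q ≠ 0 := by rintro rfl; simp at hq
  have hcard : Nat.card Fˣ = (q - 1) * (q + 1) := by
    rw [Nat.card_units, Nat.card_eq_fintype_card, hq]
    simpa [mul_comm] using Nat.sq_sub_sq q 1
  -- In the cyclic group `Fˣ` of order `(q - 1) * (q + 1)`, the `(q + 1)`-st powers are exactly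
  -- the solutions of `y ^ (q - 1) = 1`, and `x ^ (q + 1) = 1` has `q + 1 ≥ 2` solutions.
  have hrange : (powMonoidHom (q + 1) : Fˣ →* Fˣ).range = (powMonoidHom (q - 1)).ker := by
    refine Subgroup.eq_of_le_of_card_ge ?_ ?_
    · rintro _ ⟨x, rfl⟩
      simp [← pow_mul, mul_comm (q + 1), ← hcard, pow_card_eq_one']
    · rw [IsCyclic.card_powMonoidHom_range, IsCyclic.card_powMonoidHom_ker, hcard,
        Nat.gcd_mul_left_left, Nat.gcd_mul_right_left, Nat.mul_div_cancel _ (by omega)]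
  have hneg' : (-1 : Fˣ) ∈ (powMonoidHom (q + 1) : Fˣ →* Fˣ).range := by
    obtain ⟨r, rfl⟩ := Nat.exists_eq_succ_of_ne_zero hq0
    rw [hrange, MonoidHom.mem_ker, powMonoidHom_apply, Units.ext_iff]
    simpa [pow_succ] using hneg
  obtain ⟨b, hb⟩ := hneg'
  have hker : 1 < Nat.card (powMonoidHom (q + 1) : Fˣ →* Fˣ).ker := by
    rw [IsCyclic.card_powMonoidHom_ker, hcard, Nat.gcd_mul_left_left]; omega
  obtain ⟨ζ, hζ, hζ1⟩ := (Subgroup.bot_or_exists_ne_one _).resolve_left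
    ((Subgroup.one_lt_card_iff_ne_bot _).1 hker)
  rw [MonoidHom.mem_ker, powMonoidHom_apply] at hζ
  rw [powMonoidHom_apply] at hb
  refine ⟨b, ↑(b * ζ), by simpa [eq_comm] using hζ1, ?_, ?_⟩
  · rw [← Units.val_pow_eq_pow_val, hb, Units.val_neg, Units.val_one]
  · rw [← Units.val_pow_eq_pow_val, mul_pow, hb, hζ, mul_one, Units.val_neg, Units.val_one]

end FiniteField

abbrev starRingOfInvolutive {R : Type*} [CommSemiring R] (φ : R →+* R)
    (hφ : Function.Involutive φ) : StarRing R where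
  star := φ
  star_involutive := hφ
  star_mul x y := by rw [map_mul, mul_comm]
  star_add := map_add φ

/-- Over `𝔽_{q²}` there is a `d × (d+1)` matrix `B` such that `BB*` and `B*B`
are nilpotent with a single Jordan block. -/
theorem stmt8 (F : Type*) [Field F] [Fintype F] (q d : ℕ)
    (hq : Fintype.card F = q ^ 2) (hd : 0 < d) :
    ∃ B : Matrix (Fin d) (Fin (d + 1)) F,
      IsNilpotent (B * (B.map (· ^ q))ᵀ) ∧
      (B * (B.map (· ^ q))ᵀ).rank = d - 1 ∧
      (B * (B.map (· ^ q))ᵀ) ^ (d - 1) ≠ 0 ∧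
      IsNilpotent ((B.map (· ^ q))ᵀ * B) ∧
      ((B.map (· ^ q))ᵀ * B).rank = d ∧
      ((B.map (· ^ q))ᵀ * B) ^ d ≠ 0 := by
  obtain ⟨φ, hφ⟩ := FiniteField.exists_ringHom_eq_pow_of_card_eq_sq hq
  let _ : StarRing F := starRingOfInvolutive φ fun x => by
    rw [hφ, hφ, ← pow_mul, ← sq, ← hq, FiniteField.pow_card]
  obtain ⟨b, b', hne, hb, hb'⟩ :=
    FiniteField.exists_ne_pow_succ_eq_neg_one_of_card_eq_sq hq (by rw [← hφ, map_neg, map_one])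
  have hnorm (x : F) : star x * x = x ^ (q + 1) := by rw [pow_succ, ← hφ]; rfl
  obtain ⟨B, hBB, hBB'⟩ :=
    exists_isRegularNilpotent_mul_conjTranspose ((hnorm b).trans hb) ((hnorm b').trans hb') hne hd
  have hB : (B.map (· ^ q))ᵀ = Bᴴ := by ext i j; exact (hφ _).symm
  refine ⟨B, ?_⟩
  rw [hB]
  exact ⟨hBB.1, hBB.2.1, hBB.2.2, hBB'.1, hBB'.2.1, hBB'.2.2⟩
end

section
/- Let L be a field, λ a partition of m and μ a partition of n with |λ_i − μ_i| ≤ 1 for all i (after padding with zeros). Then there exist A ∈ M_{m×n}(L) and B ∈ M_{n×m}(L) with AB nilpotent, μ(AB) = λ, and μ(BA) = μ. -/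
/-!
Index bases of `L^m` and `L^n` by the cells of the Young diagrams of `λ` and `μ`. In row `i`,
if `μᵢ ≤ λᵢ` let `A` push each cell of the `μ`-row one step along the `λ`-row and let `B` copy
cells back in place, and the other way round if `λᵢ < μᵢ`. Because the two rows differ by at most
one cell, `AB` and `BA` are the shifts along the rows of the two diagrams, that is, nilpotent
matrices of Jordan types `λ` and `μ`. All matrices involved are matrices of partial bijections,
so the rank of a power of a shift is a count of cells.
-/

open Matrix Finset

namespace PEquiv

variable {R m n : Type*} [DecidableEq m]

lemma toMatrix_ofSet [Zero R] [One R] (s : Set m) [DecidablePred (· ∈ s)] :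
    ((ofSet s).toMatrix : Matrix m m R) = diagonal fun i => if i ∈ s then 1 else 0 := by
  ext i j
  by_cases hij : i = j
  · subst hij; by_cases h : i ∈ s <;> simp [h]
  · simp [hij, Ne.symm hij]

lemma ofSet_isSome_trans_self {α β : Type*} (f : α ≃. β) :
    (ofSet {a | (f a).isSome}).trans f = f := by
  ext a b
  cases h : f a <;> simp [PEquiv.trans, ofSet, h]

theorem rank_toMatrix [Field R] [Fintype m] [Fintype n] [DecidableEq n] (f : m ≃. n) :
    (f.toMatrix : Matrix m n R).rank = Fintype.card {i // (f i).isSome} := by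
  classical
  have hdom : ((ofSet {i | (f i).isSome}).toMatrix : Matrix m m R).rank =
      Fintype.card {i // (f i).isSome} := by
    rw [toMatrix_ofSet, rank_diagonal]
    exact Fintype.card_congr (Equiv.subtypeEquivRight fun i => by simp [Option.ne_none_iff_isSome])
  rw [← hdom]
  refine le_antisymm ?_ ?_
  · conv_lhs => rw [← ofSet_isSome_trans_self f, toMatrix_trans]
    exact rank_mul_le_left _ _
  · rw [← self_trans_symm, toMatrix_trans]
    exact rank_mul_le_left _ _

end PEquiv

lemma Fin.card_filter_le_val (n k : ℕ) : #{j : Fin n | k ≤ (j : ℕ)} = n - k := by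
  have h := card_filter_add_card_filter_not (s := (univ : Finset (Fin n))) fun j : Fin n => j < k
  simp only [not_lt, Fin.card_filter_val_lt, card_univ, Fintype.card_fin] at h
  omega

lemma Sigma.fin_mk_eq_iff {ι : Type*} {p : ι → ℕ} {i : ι} {j : Fin (p i)} {x : Σ i, Fin (p i)} :
    (⟨i, j⟩ : Σ i, Fin (p i)) = x ↔ i = x.1 ∧ (j : ℕ) = x.2 := by
  obtain ⟨i', j'⟩ := x
  constructor
  · rintro ⟨⟩; simp
  · rintro ⟨rfl, h⟩; rw [Fin.ext h]

namespace Flanders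

variable {ι : Type*}

/-- `Σ i, Fin (p i)` is the set of cells of a Young diagram with row lengths `p i`, and
`rowShift p q a` moves the cell `(i, j)` to `(i, j - a i)` when that cell exists. The matrix of
`rowShift p p 1` is the nilpotent matrix with one Jordan block of size `p i` for each `i`. -/
def rowShift (p q a : ι → ℕ) : (Σ i, Fin (p i)) ≃. (Σ i, Fin (q i)) where
  toFun x :=
    if h : a x.1 ≤ x.2 ∧ x.2 - a x.1 < q x.1 then some ⟨x.1, x.2 - a x.1, h.2⟩ else none
  invFun y := if h : y.2 + a y.1 < p y.1 then some ⟨y.1, y.2 + a y.1, h⟩ else none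
  inv := by
    rintro ⟨i, j⟩ ⟨i', j'⟩
    dsimp only
    have := j.isLt
    have := j'.isLt
    split_ifs with h h'
    all_goals simp only [Option.some.injEq, Sigma.fin_mk_eq_iff, false_iff, iff_false, not_and]
    · constructor <;> rintro ⟨rfl, _⟩ <;> exact ⟨rfl, by omega⟩
    · rintro rfl _; omega
    · rintro rfl _; omega

variable {p q s : ι → ℕ}

lemma mem_rowShift_iff {a : ι → ℕ} {x : Σ i, Fin (p i)} {y : Σ i, Fin (q i)} :
    y ∈ rowShift p q a x ↔ y.1 = x.1 ∧ (y.2 : ℕ) + a x.1 = x.2 := by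
  rw [← PEquiv.mem_iff_mem]
  obtain ⟨i, j⟩ := x
  obtain ⟨i', j'⟩ := y
  simp only [rowShift, PEquiv.symm, PEquiv.coe_mk]
  split_ifs with h
  · simp only [Option.mem_def, Option.some.injEq, Sigma.fin_mk_eq_iff]
    constructor <;> rintro ⟨rfl, h⟩ <;> exact ⟨rfl, h⟩
  · simp only [Option.mem_def, reduceCtorEq, false_iff, not_and]
    rintro rfl _
    have := j.isLt
    omega

lemma isSome_rowShift_iff {a : ι → ℕ} {x : Σ i, Fin (p i)} :
    (rowShift p q a x).isSome ↔ a x.1 ≤ x.2 ∧ x.2 - a x.1 < q x.1 := by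
  simp only [rowShift, PEquiv.coe_mk]
  split_ifs with h <;> simpa using h

theorem rowShift_trans {a b : ι → ℕ} (h : ∀ i, p i ≤ q i + a i) :
    (rowShift p q a).trans (rowShift q s b) = rowShift p s (a + b) := by
  ext ⟨i, j⟩ ⟨i', j'⟩
  simp only [← Option.mem_def, PEquiv.mem_trans, mem_rowShift_iff, Pi.add_apply]
  constructor
  · rintro ⟨⟨k, l⟩, ⟨rfl, hl⟩, rfl, hj'⟩
    exact ⟨rfl, by omega⟩
  · rintro ⟨rfl, hj'⟩
    have := j.isLt
    have := h i'
    exact ⟨⟨i', j' + b i', by omega⟩, ⟨rfl, by simp; omega⟩, rfl, rfl⟩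

theorem rowShift_eq_bot {a : ι → ℕ} (h : ∀ i, p i ≤ a i) : rowShift p q a = ⊥ := by
  refine PEquiv.ext fun x => Option.not_isSome_iff_eq_none.mp ?_
  rw [isSome_rowShift_iff]
  have := x.2.isLt
  have := h x.1
  omega

theorem rowShift_zero : rowShift p p 0 = PEquiv.refl _ := by
  ext x ⟨i, j⟩
  simp only [← Option.mem_def, mem_rowShift_iff, Pi.zero_apply, add_zero, PEquiv.refl_apply,
    Option.mem_some_iff]
  rw [@eq_comm _ x, Sigma.fin_mk_eq_iff]

lemma card_isSome_rowShift [Fintype ι] (k : ℕ) :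
    Fintype.card {x // (rowShift p p (fun _ => k) x).isSome} = ∑ i, (p i - k) := by
  simp only [isSome_rowShift_iff]
  rw [Fintype.card_subtype, Finset.card_filter, Fintype.sum_sigma]
  refine Finset.sum_congr rfl fun i _ => ?_
  rw [← Finset.card_filter, ← Fin.card_filter_le_val]
  congr 1
  ext j
  simpa using fun _ => (Nat.sub_le _ _).trans_lt j.isLt

variable (R : Type*) [Semiring R] [Fintype ι] [DecidableEq ι]

theorem toMatrix_rowShift_one_pow (k : ℕ) :
    ((rowShift p p 1).toMatrix : Matrix _ _ R) ^ k = (rowShift p p fun _ => k).toMatrix := by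
  induction k with
  | zero => rw [pow_zero, ← Pi.zero_def, rowShift_zero, PEquiv.toMatrix_refl]
  | succ k ih =>
    rw [pow_succ', ih, ← PEquiv.toMatrix_trans, rowShift_trans fun i => Nat.le_add_right _ _]
    congr 2
    funext i
    exact add_comm 1 k

theorem isNilpotent_toMatrix_rowShift_one :
    IsNilpotent ((rowShift p p 1).toMatrix : Matrix _ _ R) :=
  ⟨Finset.univ.sup p, by
    rw [toMatrix_rowShift_one_pow, rowShift_eq_bot fun i => Finset.le_sup (Finset.mem_univ i),
      PEquiv.toMatrix_bot]⟩

theorem exists_mul_eq_and_mul_eq_toMatrix_rowShift (hpq : ∀ i, p i ≤ q i + 1 ∧ q i ≤ p i + 1) :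
    ∃ (A : Matrix (Σ i, Fin (p i)) (Σ i, Fin (q i)) R)
      (B : Matrix (Σ i, Fin (q i)) (Σ i, Fin (p i)) R),
      A * B = (rowShift p p 1).toMatrix ∧ B * A = (rowShift q q 1).toMatrix := by
  let a i := if q i ≤ p i then 1 else 0
  let b i := if q i ≤ p i then 0 else 1
  have hab : a + b = 1 := by
    funext i; simp only [a, b, Pi.add_apply, Pi.one_apply]; split_ifs <;> rfl
  refine ⟨(rowShift p q a).toMatrix, (rowShift q p b).toMatrix, ?_, ?_⟩
  · rw [← PEquiv.toMatrix_trans, rowShift_trans, hab]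
    intro i; have := hpq i; simp only [a]; split_ifs <;> omega
  · rw [← PEquiv.toMatrix_trans, rowShift_trans, add_comm, hab]
    intro i; have := hpq i; simp only [b]; split_ifs <;> omega

theorem rank_toMatrix_rowShift (K : Type*) [Field K] (k : ℕ) :
    ((rowShift p p fun _ => k).toMatrix : Matrix _ _ K).rank = ∑ i, (p i - k) := by
  rw [PEquiv.rank_toMatrix, card_isSome_rowShift]

end Flanders

lemma Matrix.submatrix_equiv_pow {m n α : Type*} [Fintype m] [DecidableEq m] [Fintype n]
    [DecidableEq n] [Semiring α] (M : Matrix m m α) (e : n ≃ m) (k : ℕ) :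
    (M.submatrix e e) ^ k = (M ^ k).submatrix e e := by
  induction k with
  | zero => simp [submatrix_one_equiv]
  | succ k ih => rw [pow_succ, ih, submatrix_mul_equiv, pow_succ]

lemma Fin.sum_univ_eq_sum_range_of_le {K m : ℕ} {f : ℕ → ℕ} (hmK : m ≤ K)
    (hf : ∀ i, m ≤ i → f i = 0) : ∑ i : Fin K, f i = ∑ i ∈ range m, f i := by
  rw [Fin.sum_univ_eq_sum_range f K, eventually_constant_sum hf hmK]

open Flanders in
theorem stmt11_general (L : Type*) [Field L] (m n : ℕ)
    (lam mu : ℕ → ℕ)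
    (hlam0 : ∀ i, m ≤ i → lam i = 0) (hmu0 : ∀ i, n ≤ i → mu i = 0)
    (hlsum : ∑ i ∈ Finset.range m, lam i = m)
    (hmsum : ∑ i ∈ Finset.range n, mu i = n)
    (hclose : ∀ i, lam i ≤ mu i + 1 ∧ mu i ≤ lam i + 1) :
    ∃ (A : Matrix (Fin m) (Fin n) L) (B : Matrix (Fin n) (Fin m) L),
      IsNilpotent (A * B) ∧
      (∀ k : ℕ, ((A * B) ^ k).rank = ∑ i ∈ Finset.range m, (lam i - k)) ∧
      (∀ k : ℕ, ((B * A) ^ k).rank = ∑ i ∈ Finset.range n, (mu i - k)) := by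
  let p (i : Fin (m + n)) := lam i
  let q (i : Fin (m + n)) := mu i
  have hp (k : ℕ) : ∑ i, (p i - k) = ∑ i ∈ range m, (lam i - k) :=
    Fin.sum_univ_eq_sum_range_of_le (f := (lam · - k)) (Nat.le_add_right m n) fun i hi => by
      simp [hlam0 i hi]
  have hq (k : ℕ) : ∑ i, (q i - k) = ∑ i ∈ range n, (mu i - k) :=
    Fin.sum_univ_eq_sum_range_of_le (f := (mu · - k)) (Nat.le_add_left n m) fun i hi => by
      simp [hmu0 i hi]
  obtain ⟨eX⟩ : Nonempty (Fin m ≃ Σ i, Fin (p i)) := by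
    rw [← Fintype.card_eq, Fintype.card_sigma, Fintype.card_fin]
    simpa [hlsum] using (hp 0).symm
  obtain ⟨eY⟩ : Nonempty (Fin n ≃ Σ i, Fin (q i)) := by
    rw [← Fintype.card_eq, Fintype.card_sigma, Fintype.card_fin]
    simpa [hmsum] using (hq 0).symm
  obtain ⟨A, B, hAB, hBA⟩ :=
    exists_mul_eq_and_mul_eq_toMatrix_rowShift L (p := p) (q := q) fun i => hclose i
  refine ⟨A.submatrix eX eY, B.submatrix eY eX, ?_, fun k => ?_, fun k => ?_⟩
  · obtain ⟨k, hk⟩ := isNilpotent_toMatrix_rowShift_one (p := p) L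
    exact ⟨k, by rw [submatrix_mul_equiv, hAB, Matrix.submatrix_equiv_pow, hk]; rfl⟩
  · rw [submatrix_mul_equiv, hAB, Matrix.submatrix_equiv_pow, rank_submatrix,
      toMatrix_rowShift_one_pow, rank_toMatrix_rowShift, hp]
  · rw [submatrix_mul_equiv, hBA, Matrix.submatrix_equiv_pow, rank_submatrix,
      toMatrix_rowShift_one_pow, rank_toMatrix_rowShift, hq]

/-- Flanders' theorem, converse direction: given partitions `λ ⊢ m`, `μ ⊢ n`
with `|λᵢ - μᵢ| ≤ 1` for all `i`, there are matrices `A`, `B` with `AB`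
nilpotent of Jordan type `λ` and `BA` of Jordan type `μ` (encoded via ranks of
powers: `rank(N^k) = ∑ᵢ (λᵢ - k)₊`). -/
theorem stmt11 (L : Type*) [Field L] (m n : ℕ)
    (lam mu : ℕ → ℕ) (hlam : Antitone lam) (hmu : Antitone mu)
    (hlam0 : ∀ i, m ≤ i → lam i = 0) (hmu0 : ∀ i, n ≤ i → mu i = 0)
    (hlsum : ∑ i ∈ Finset.range m, lam i = m)
    (hmsum : ∑ i ∈ Finset.range n, mu i = n)
    (hclose : ∀ i, lam i ≤ mu i + 1 ∧ mu i ≤ lam i + 1) :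
    ∃ (A : Matrix (Fin m) (Fin n) L) (B : Matrix (Fin n) (Fin m) L),
      IsNilpotent (A * B) ∧
      (∀ k : ℕ, ((A * B) ^ k).rank = ∑ i ∈ Finset.range m, (lam i - k)) ∧
      (∀ k : ℕ, ((B * A) ^ k).rank = ∑ i ∈ Finset.range n, (mu i - k)) :=
  stmt11_general L m n lam mu hlam0 hmu0 hlsum hmsum hclose
end
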